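/- arXiv:1401.8219 — 9 statements merged into one kernel-verified Lean document; each statement's English description precedes it below -/
import Mathlib

section
/- For a reciprocal n×n positive matrix M with Koczkodaj inconsistency index K(M), setting α = 1 − K(M), every triad of entries satisfies α · m_{ik} · m_{kj} ≤ m_{ij} ≤ (1/α) · m_{ik} · m_{kj} for all distinct indices i, j, k. -/
open Matrix Finset

/-- Koczkodaj's inconsistency index: maximum over distinct triples. -/
noncomputable def kocz {n : ℕ} (M : Matrix (Fin n) (Fin n) ℝ) : ℝ :=
  sSup {x : ℝ | ∃ i j k : Fin n, i ≠ j ∧ j ≠ k ∧ i ≠ k ∧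
    x = min |1 - M i j / (M i k * M k j)| |1 - (M i k * M k j) / M i j|}

/-- Ranking error. -/
noncomputable def eps {n : ℕ} (M : Matrix (Fin n) (Fin n) ℝ) (μ : Fin n → ℝ)
    (i j : Fin n) : ℝ :=
  (1 / M i j) * (μ i / μ j)

/-- Local ranking discrepancy. -/
noncomputable def locE {n : ℕ} (M : Matrix (Fin n) (Fin n) ℝ) (μ : Fin n → ℝ)
    (i j : Fin n) : ℝ :=
  max (eps M μ i j - 1) (1 / eps M μ i j - 1)

/-- Global ranking discrepancy. -/
noncomputable def disc {n : ℕ} (M : Matrix (Fin n) (Fin n) ℝ) (μ : Fin n → ℝ) : ℝ :=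
  sSup {x : ℝ | ∃ i j : Fin n, x = locE M μ i j}

lemma min_abs_lt_one {t : ℝ} (ht : 0 < t) : min |1 - t| |1 - 1/t| < 1 := by
  rcases le_or_gt t 1 with h | h
  · calc min |1 - t| |1 - 1/t| ≤ |1 - t| := min_le_left _ _
      _ = 1 - t := by rw [abs_of_nonneg]; linarith
      _ < 1 := by linarith
  · have h1 : 0 < 1/t := by positivity
    have h2 : 1/t < 1 := by rw [div_lt_one ht]; linarith
    calc min |1 - t| |1 - 1/t| ≤ |1 - 1/t| := min_le_right _ _
      _ = 1 - 1/t := by rw [abs_of_nonneg]; linarith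
      _ < 1 := by linarith

theorem triad_bound {n : ℕ} (hn : 2 < n) (M : Matrix (Fin n) (Fin n) ℝ)
    (hpos : ∀ i j, 0 < M i j) (hrec : ∀ i j, M i j = 1 / M j i) :
    ∀ i j k : Fin n, i ≠ j → j ≠ k → i ≠ k →
      (1 - kocz M) * (M i k * M k j) ≤ M i j ∧
        M i j ≤ (1 / (1 - kocz M)) * (M i k * M k j) := by
  intro i j k hij hjk hik
  set S : Set ℝ := {x : ℝ | ∃ i j k : Fin n, i ≠ j ∧ j ≠ k ∧ i ≠ k ∧
    x = min |1 - M i j / (M i k * M k j)| |1 - (M i k * M k j) / M i j|} with hS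
  have hKdef : kocz M = sSup S := rfl
  have hSfin : S.Finite := by
    apply Set.Finite.subset (Set.finite_range
      (fun p : Fin n × Fin n × Fin n =>
        min |1 - M p.1 p.2.1 / (M p.1 p.2.2 * M p.2.2 p.2.1)|
          |1 - (M p.1 p.2.2 * M p.2.2 p.2.1) / M p.1 p.2.1|))
    rintro x ⟨a, b, c, _, _, _, rfl⟩
    exact ⟨(a, b, c), rfl⟩
  have hmem : min |1 - M i j / (M i k * M k j)| |1 - (M i k * M k j) / M i j| ∈ S :=
    ⟨i, j, k, hij, hjk, hik, rfl⟩
  have hne : S.Nonempty := ⟨_, hmem⟩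
  have hbdd : BddAbove S := hSfin.bddAbove
  set K := kocz M with hKd
  have hKmem : K ∈ S := by rw [hKdef]; exact hne.csSup_mem hSfin
  have hK0 : 0 ≤ K := by
    obtain ⟨a, b, c, _, _, _, h⟩ := hKmem
    rw [h]; exact le_min (abs_nonneg _) (abs_nonneg _)
  have hK1 : K < 1 := by
    obtain ⟨a, b, c, _, _, _, h⟩ := hKmem
    rw [h]
    have ht : 0 < M a b / (M a c * M c b) := by
      have := hpos a b; have := hpos a c; have := hpos c b; positivity
    have hmin := min_abs_lt_one ht
    have heq : (1:ℝ) / (M a b / (M a c * M c b)) = (M a c * M c b) / M a b := by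
      have := hpos a b; have := hpos a c; have := hpos c b
      field_simp
    rw [heq] at hmin
    exact hmin
  have hle : min |1 - M i j / (M i k * M k j)| |1 - (M i k * M k j) / M i j| ≤ K := by
    rw [hKdef]; exact le_csSup hbdd hmem
  set a := M i j with hadef
  set b := M i k * M k j with hbdef
  have ha : 0 < a := hpos i j
  have hb : 0 < b := by have := hpos i k; have := hpos k j; positivity
  have h1K : 0 < 1 - K := by linarith
  rcases min_le_iff.mp hle with h | h
  · rw [abs_le] at h
    obtain ⟨h1, h2⟩ := h
    have hlo : 1 - K ≤ a / b := by linarith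
    have hhi : a / b ≤ 1 + K := by linarith
    have hab1 : (1 - K) * b ≤ a := by
      have := (le_div_iff₀ hb).mp hlo; linarith
    have hab2 : a ≤ (1 + K) * b := by
      have := (div_le_iff₀ hb).mp hhi; linarith
    refine ⟨hab1, ?_⟩
    have hcmp : (1 + K) * b ≤ (1 / (1 - K)) * b := by
      have hq : (1 + K) ≤ 1 / (1 - K) := by
        rw [le_div_iff₀ h1K]; nlinarith [sq_nonneg K]
      nlinarith
    linarith
  · rw [abs_le] at h
    obtain ⟨h1, h2⟩ := h
    have hlo : 1 - K ≤ b / a := by linarith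
    have hhi : b / a ≤ 1 + K := by linarith
    have hba1 : (1 - K) * a ≤ b := by
      have := (le_div_iff₀ ha).mp hlo; linarith
    have hba2 : b ≤ (1 + K) * a := by
      have := (div_le_iff₀ ha).mp hhi; linarith
    constructor
    · nlinarith [sq_nonneg K]
    · rw [← sub_nonneg]
      have key : (1 - K) * ((1 / (1 - K)) * b - a) = b - (1 - K) * a := by
        field_simp
      nlinarith [mul_pos h1K ha]
end

section
/- Let M be a reciprocal n×n positive matrix, μ a positive eigenvector of M with eigenvalue λ_max (i.e. Mμ = λ_max μ with μ componentwise positive), and α = 1 − K(M) where K is the Koczkodaj inconsistency index. Then for all i, j, the ranking error ε(i,j) = (1/m_{ij}) · μ_i/μ_j satisfies α ≤ ε(i,j) ≤ 1/α. -/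
open Matrix Finset

private lemma ratio_bound {x K : ℝ} (hx : 0 < x) (hK1 : K < 1)
    (hmin : min |1 - x| |1 - x⁻¹| ≤ K) : 1 - K ≤ x ∧ x ≤ 1 / (1 - K) := by
  have hK0 : 0 ≤ K := le_trans (le_min (abs_nonneg _) (abs_nonneg _)) hmin
  have hxx : x * x⁻¹ = 1 := mul_inv_cancel₀ hx.ne'
  have hxi : 0 < x⁻¹ := inv_pos.mpr hx
  have hden : 0 < 1 - K := by linarith
  rcases min_le_iff.mp hmin with h | h
  · obtain ⟨h1, h2⟩ := abs_le.mp h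
    constructor
    · linarith
    · rw [le_div_iff₀ hden]; nlinarith [sq_nonneg K]
  · obtain ⟨h1, h2⟩ := abs_le.mp h
    have hup : x * x⁻¹ ≤ x * (1 + K) :=
      mul_le_mul_of_nonneg_left (by linarith) hx.le
    have hlo : x * (1 - K) ≤ x * x⁻¹ :=
      mul_le_mul_of_nonneg_left (by linarith) hx.le
    constructor
    · nlinarith [sq_nonneg K]
    · rw [le_div_iff₀ hden]; nlinarith

theorem eps_bound {n : ℕ} (hn : 2 < n) (M : Matrix (Fin n) (Fin n) ℝ)
    (hpos : ∀ i j, 0 < M i j) (hrec : ∀ i j, M i j = 1 / M j i)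
    (μ : Fin n → ℝ) (hμ : ∀ i, 0 < μ i) (lmax : ℝ)
    (hev : M.mulVec μ = lmax • μ) :
    ∀ i j : Fin n, 1 - kocz M ≤ eps M μ i j ∧ eps M μ i j ≤ 1 / (1 - kocz M) := by
  -- diagonal is 1
  have hdiag : ∀ i, M i i = 1 := by
    intro i
    have h := hrec i i
    have hp := hpos i i
    field_simp at h
    have h2 : (M i i - 1) * (M i i + 1) = 0 := by nlinarith
    rcases mul_eq_zero.mp h2 with h3 | h3
    · linarith
    · linarith
  -- the set defining kocz
  set S : Set ℝ := {x : ℝ | ∃ i j k : Fin n, i ≠ j ∧ j ≠ k ∧ i ≠ k ∧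
    x = min |1 - M i j / (M i k * M k j)| |1 - (M i k * M k j) / M i j|} with hSdef
  have hkocz : kocz M = sSup S := rfl
  have hfin : S.Finite := by
    have hsub : S ⊆ Set.range (fun p : Fin n × Fin n × Fin n =>
        min |1 - M p.1 p.2.1 / (M p.1 p.2.2 * M p.2.2 p.2.1)|
            |1 - (M p.1 p.2.2 * M p.2.2 p.2.1) / M p.1 p.2.1|) := by
      rintro x ⟨i, j, k, _, _, _, rfl⟩
      exact ⟨(i, j, k), rfl⟩
    exact (Set.finite_range _).subset hsub
  have hne : S.Nonempty := by
    refine ⟨_, ⟨⟨0, by omega⟩, ⟨1, by omega⟩, ⟨2, by omega⟩, ?_, ?_, ?_, rfl⟩⟩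
    · simp [Fin.ext_iff]
    · simp [Fin.ext_iff]
    · simp [Fin.ext_iff]
  have hmem : sSup S ∈ S := hne.csSup_mem hfin
  have hK0 : 0 ≤ kocz M := by
    obtain ⟨i, j, k, _, _, _, he⟩ := hmem
    rw [hkocz, he]
    exact le_min (abs_nonneg _) (abs_nonneg _)
  have hK1 : kocz M < 1 := by
    obtain ⟨i, j, k, _, _, _, he⟩ := hmem
    rw [hkocz, he]
    have ha : 0 < M i j := hpos i j
    have hb : 0 < M i k * M k j := mul_pos (hpos i k) (hpos k j)
    rcases le_total (M i j) (M i k * M k j) with h | h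
    · have h1 : 0 < M i j / (M i k * M k j) := div_pos ha hb
      have h2 : M i j / (M i k * M k j) ≤ 1 := (div_le_one hb).mpr h
      calc min |1 - M i j / (M i k * M k j)| |1 - (M i k * M k j) / M i j|
          ≤ |1 - M i j / (M i k * M k j)| := min_le_left _ _
        _ < 1 := by rw [abs_of_nonneg (by linarith)]; linarith
    · have h1 : 0 < (M i k * M k j) / M i j := div_pos hb ha
      have h2 : (M i k * M k j) / M i j ≤ 1 := (div_le_one ha).mpr h
      calc min |1 - M i j / (M i k * M k j)| |1 - (M i k * M k j) / M i j|
          ≤ |1 - (M i k * M k j) / M i j| := min_le_right _ _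
        _ < 1 := by rw [abs_of_nonneg (by linarith)]; linarith
  have hden : 0 < 1 - kocz M := by linarith
  have hone : (1 : ℝ) ≤ 1 / (1 - kocz M) := by
    rw [le_div_iff₀ hden]; linarith
  -- triple bound
  have htriple : ∀ a b c : Fin n, a ≠ b → b ≠ c → a ≠ c →
      1 - kocz M ≤ M a b / (M a c * M c b) ∧
        M a b / (M a c * M c b) ≤ 1 / (1 - kocz M) := by
    intro a b c hab hbc hac
    have hx : 0 < M a b / (M a c * M c b) :=
      div_pos (hpos a b) (mul_pos (hpos a c) (hpos c b))
    have hmem' : min |1 - M a b / (M a c * M c b)| |1 - (M a c * M c b) / M a b| ∈ S :=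
      ⟨a, b, c, hab, hbc, hac, rfl⟩
    have hle : min |1 - M a b / (M a c * M c b)| |1 - (M a c * M c b) / M a b| ≤ kocz M :=
      le_csSup hfin.bddAbove hmem'
    have hinv : (M a c * M c b) / M a b = (M a b / (M a c * M c b))⁻¹ := by
      rw [inv_div]
    rw [hinv] at hle
    exact ratio_bound hx hK1 hle
  -- eigenvalue positivity
  have hrow : ∀ l : Fin n, ∑ k, M l k * μ k = lmax * μ l := by
    intro l
    have h := congrFun hev l
    simpa [Matrix.mulVec, dotProduct] using h
  have hlpos : 0 < lmax := by
    have i0 : Fin n := ⟨0, by omega⟩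
    have h := hrow i0
    have hsum : 0 < ∑ k, M i0 k * μ k :=
      Finset.sum_pos (fun k _ => mul_pos (hpos i0 k) (hμ k)) ⟨i0, Finset.mem_univ i0⟩
    nlinarith [hμ i0]
  intro i j
  have hb : 0 < M i j * μ j := mul_pos (hpos i j) (hμ j)
  -- termwise bounds
  have key : ∀ k : Fin n, (1 - kocz M) * (M i j * M j k) ≤ M i k ∧
      M i k ≤ 1 / (1 - kocz M) * (M i j * M j k) := by
    intro k
    by_cases hij : i = j
    · subst hij
      rw [hdiag i, one_mul]
      constructor
      · nlinarith [hpos i k, mul_nonneg hK0 (hpos i k).le]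
      · nlinarith [mul_le_mul_of_nonneg_right hone (hpos i k).le]
    · by_cases hki : k = i
      · subst hki
        have h1 : M k j * M j k = 1 := by
          rw [hrec k j]
          exact one_div_mul_cancel (hpos j k).ne'
        rw [hdiag k, h1]
        constructor
        · linarith
        · linarith
      · by_cases hkj : k = j
        · subst hkj
          rw [hdiag k, mul_one]
          constructor
          · nlinarith [hpos i k, mul_nonneg hK0 (hpos i k).le]
          · nlinarith [mul_le_mul_of_nonneg_right hone (hpos i k).le]
        · have hbk : 0 < M i j * M j k := mul_pos (hpos i j) (hpos j k)
          obtain ⟨hl, hr⟩ := htriple i k j (fun h => hki h.symm) hkj hij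
          constructor
          · rw [le_div_iff₀ hbk] at hl
            linarith
          · rw [div_le_iff₀ hbk] at hr
            linarith
  have lower : (1 - kocz M) * M i j * (lmax * μ j) ≤ lmax * μ i := by
    rw [← hrow i, ← hrow j, Finset.mul_sum]
    calc ∑ k, (1 - kocz M) * M i j * (M j k * μ k)
        = ∑ k, (1 - kocz M) * (M i j * M j k) * μ k := by
          apply Finset.sum_congr rfl; intro k _; ring
      _ ≤ ∑ k, M i k * μ k :=
          Finset.sum_le_sum (fun k _ => mul_le_mul_of_nonneg_right (key k).1 (hμ k).le)
  have upper : lmax * μ i ≤ 1 / (1 - kocz M) * M i j * (lmax * μ j) := by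
    rw [← hrow i, ← hrow j, Finset.mul_sum]
    calc ∑ k, M i k * μ k
        ≤ ∑ k, 1 / (1 - kocz M) * (M i j * M j k) * μ k :=
          Finset.sum_le_sum (fun k _ => mul_le_mul_of_nonneg_right (key k).2 (hμ k).le)
      _ = ∑ k, 1 / (1 - kocz M) * M i j * (M j k * μ k) := by
          apply Finset.sum_congr rfl; intro k _; ring
  have h1 : (1 - kocz M) * (M i j * μ j) ≤ μ i := by
    have lower' : lmax * ((1 - kocz M) * (M i j * μ j)) ≤ lmax * μ i := by
      calc lmax * ((1 - kocz M) * (M i j * μ j))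
          = (1 - kocz M) * M i j * (lmax * μ j) := by ring
        _ ≤ lmax * μ i := lower
    exact le_of_mul_le_mul_left lower' hlpos
  have h2 : μ i ≤ 1 / (1 - kocz M) * (M i j * μ j) := by
    have upper' : lmax * μ i ≤ lmax * (1 / (1 - kocz M) * (M i j * μ j)) := by
      calc lmax * μ i ≤ 1 / (1 - kocz M) * M i j * (lmax * μ j) := upper
        _ = lmax * (1 / (1 - kocz M) * (M i j * μ j)) := by ring
    exact le_of_mul_le_mul_left upper' hlpos
  have heps : eps M μ i j = μ i / (M i j * μ j) := by
    unfold eps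
    field_simp
  rw [heps]
  constructor
  · rw [le_div_iff₀ hb]
    linarith
  · rw [div_le_iff₀ hb]
    linarith
end

section
/- Let M be a reciprocal n×n positive matrix with positive eigenvector μ and α = 1 − K(M). Then the global ranking discrepancy satisfies 0 ≤ D(M,μ) ≤ 1/α − 1, where D(M,μ) = max_{i,j} max{ε(i,j) − 1, 1/ε(i,j) − 1} and ε(i,j) = (1/m_{ij})(μ_i/μ_j). -/
open Matrix Finset

lemma aux1 {t : ℝ} (ht : 0 < t) : min |1 - t| |1 - t⁻¹| = 1 - min t t⁻¹ := by
  have hi : 0 < t⁻¹ := by positivity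
  have hti : t * t⁻¹ = 1 := mul_inv_cancel₀ ht.ne'
  rcases le_total t 1 with h | h
  · have h2 : 1 ≤ t⁻¹ := by nlinarith
    have h3 : 1 - t ≤ t⁻¹ - 1 := by nlinarith [sq_nonneg (t - 1)]
    rw [abs_of_nonneg (by linarith), abs_of_nonpos (by linarith),
      min_eq_left (by linarith), min_eq_left (by linarith)]
  · have h2 : t⁻¹ ≤ 1 := by nlinarith
    have h3 : 1 - t⁻¹ ≤ t - 1 := by nlinarith [sq_nonneg (t - 1)]
    rw [abs_of_nonpos (by linarith), abs_of_nonneg (by linarith),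
      min_eq_right (by linarith), min_eq_right (by linarith)]

lemma aux2 {a b : ℝ} (ha : 0 < a) (hb : 0 < b) :
    min |1 - a / b| |1 - b / a| = 1 - min (a / b) (b / a) := by
  have := aux1 (div_pos ha hb)
  rwa [inv_div] at this

theorem disc_bound {n : ℕ} (hn : 2 < n) (M : Matrix (Fin n) (Fin n) ℝ)
    (hpos : ∀ i j, 0 < M i j) (hrec : ∀ i j, M i j = 1 / M j i)
    (μ : Fin n → ℝ) (hμ : ∀ i, 0 < μ i) (lmax : ℝ)
    (hev : M.mulVec μ = lmax • μ) :
    0 ≤ disc M μ ∧ disc M μ ≤ 1 / (1 - kocz M) - 1 := by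
  have hdiag : ∀ i, M i i = 1 := by
    intro i
    have h := hrec i i
    have hp := hpos i i
    field_simp at h
    nlinarith
  set S : Set ℝ := {x : ℝ | ∃ i j k : Fin n, i ≠ j ∧ j ≠ k ∧ i ≠ k ∧
    x = min |1 - M i j / (M i k * M k j)| |1 - (M i k * M k j) / M i j|} with hSdef
  have hkocz : kocz M = sSup S := rfl
  -- bounded above by 1
  have hbddS : BddAbove S := by
    refine ⟨1, ?_⟩
    rintro x ⟨i, j, k, _, _, _, rfl⟩
    rw [aux2 (hpos i j) (mul_pos (hpos i k) (hpos k j))]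
    have : (0:ℝ) < min (M i j / (M i k * M k j)) ((M i k * M k j) / M i j) :=
      lt_min (div_pos (hpos i j) (mul_pos (hpos i k) (hpos k j)))
        (div_pos (mul_pos (hpos i k) (hpos k j)) (hpos i j))
    linarith
  -- a canonical element of S
  have h0 : (0:ℕ) < n := by omega
  have h1 : (1:ℕ) < n := by omega
  have h2 : (2:ℕ) < n := hn
  set i0 : Fin n := ⟨0, h0⟩
  set i1 : Fin n := ⟨1, h1⟩
  set i2 : Fin n := ⟨2, h2⟩
  have hne01 : i0 ≠ i1 := by simp [i0, i1, Fin.ext_iff]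
  have hne12 : i1 ≠ i2 := by simp [i1, i2, Fin.ext_iff]
  have hne02 : i0 ≠ i2 := by simp [i0, i2, Fin.ext_iff]
  have hx0mem : (min |1 - M i0 i1 / (M i0 i2 * M i2 i1)|
      |1 - (M i0 i2 * M i2 i1) / M i0 i1|) ∈ S :=
    ⟨i0, i1, i2, hne01, hne12, hne02, rfl⟩
  have hSne : S.Nonempty := ⟨_, hx0mem⟩
  have hkocz0 : 0 ≤ kocz M := by
    rw [hkocz]
    exact le_trans (le_min (abs_nonneg _) (abs_nonneg _)) (le_csSup hbddS hx0mem)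
  -- kocz M < 1
  have hfin : S.Finite := by
    have hsub : S ⊆ Set.range (fun p : Fin n × Fin n × Fin n =>
        min |1 - M p.1 p.2.1 / (M p.1 p.2.2 * M p.2.2 p.2.1)|
          |1 - (M p.1 p.2.2 * M p.2.2 p.2.1) / M p.1 p.2.1|) := by
      rintro x ⟨i, j, k, _, _, _, rfl⟩
      exact ⟨(i, j, k), rfl⟩
    exact (Set.finite_range _).subset hsub
  have hkocz1 : kocz M < 1 := by
    rw [hkocz]
    have hmem : sSup S ∈ S := hSne.csSup_mem hfin
    obtain ⟨i, j, k, _, _, _, he⟩ := hmem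
    rw [he, aux2 (hpos i j) (mul_pos (hpos i k) (hpos k j))]
    have : (0:ℝ) < min (M i j / (M i k * M k j)) ((M i k * M k j) / M i j) :=
      lt_min (div_pos (hpos i j) (mul_pos (hpos i k) (hpos k j)))
        (div_pos (mul_pos (hpos i k) (hpos k j)) (hpos i j))
    linarith
  set α : ℝ := 1 - kocz M with hαdef
  have hα : 0 < α := by simp [hαdef]; linarith
  have hα1 : α ≤ 1 := by simp [hαdef]; linarith
  -- triangle bounds
  have hmin : ∀ i j k : Fin n,
      α ≤ min (M i k / (M i j * M j k)) ((M i j * M j k) / M i k) := by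
    intro i j k
    rcases eq_or_ne i j with rfl | hij
    · have e : M i i * M i k = M i k := by rw [hdiag, one_mul]
      rw [e, div_self (hpos i k).ne', min_self]
      exact hα1
    rcases eq_or_ne j k with rfl | hjk
    · have e : M i j * M j j = M i j := by rw [hdiag, mul_one]
      rw [e, div_self (hpos i j).ne', min_self]
      exact hα1
    rcases eq_or_ne i k with rfl | hik
    · have hprod : M i j * M j i = 1 := by
        rw [hrec j i, mul_one_div, div_self (hpos i j).ne']
      rw [hdiag, hprod]
      simpa using hα1
    · have hxmem : (min |1 - M i k / (M i j * M j k)|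
          |1 - (M i j * M j k) / M i k|) ∈ S :=
        ⟨i, k, j, hik, hjk.symm, hij, rfl⟩
      have hxle := le_csSup hbddS hxmem
      rw [← hkocz] at hxle
      rw [aux2 (hpos i k) (mul_pos (hpos i j) (hpos j k))] at hxle
      linarith
  have htri_low : ∀ i j k : Fin n, α * (M i j * M j k) ≤ M i k := by
    intro i j k
    have h := le_trans (hmin i j k) (min_le_left _ _)
    rw [le_div_iff₀ (mul_pos (hpos i j) (hpos j k))] at h
    linarith
  have htri_high : ∀ i j k : Fin n, α * M i k ≤ M i j * M j k := by
    intro i j k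
    have h := le_trans (hmin i j k) (min_le_right _ _)
    rw [le_div_iff₀ (hpos i k)] at h
    linarith
  -- eigenvector equation
  have hsum : ∀ i, ∑ k, M i k * μ k = lmax * μ i := by
    intro i
    have := congrFun hev i
    simpa [Matrix.mulVec, dotProduct, smul_eq_mul] using this
  have hlpos : 0 < lmax := by
    have hs : 0 < ∑ k, M i0 k * μ k :=
      Finset.sum_pos (fun k _ => mul_pos (hpos i0 k) (hμ k)) ⟨i0, mem_univ _⟩
    rw [hsum i0] at hs
    nlinarith [hμ i0]
  -- componentwise bounds on μ
  have hμlow : ∀ i j, α * (M i j * μ j) ≤ μ i := by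
    intro i j
    have h1 : ∑ k, α * (M i j * M j k) * μ k ≤ ∑ k, M i k * μ k := by
      apply Finset.sum_le_sum
      intro k _
      have := htri_low i j k
      nlinarith [hμ k]
    have e1 : ∑ k, α * (M i j * M j k) * μ k = α * M i j * (lmax * μ j) := by
      rw [← hsum j, Finset.mul_sum]
      apply Finset.sum_congr rfl
      intro k _
      ring
    rw [e1, hsum i] at h1
    have h2 : lmax * (α * (M i j * μ j)) ≤ lmax * μ i := by nlinarith
    exact le_of_mul_le_mul_left h2 hlpos
  have hμhigh : ∀ i j, α * μ i ≤ M i j * μ j := by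
    intro i j
    have h1 : ∑ k, α * (M i k * μ k) ≤ ∑ k, M i j * M j k * μ k := by
      apply Finset.sum_le_sum
      intro k _
      have := htri_high i j k
      nlinarith [hμ k]
    have e1 : ∑ k, α * (M i k * μ k) = α * (lmax * μ i) := by
      rw [← hsum i, Finset.mul_sum]
    have e2 : ∑ k, M i j * M j k * μ k = M i j * (lmax * μ j) := by
      rw [← hsum j, Finset.mul_sum]
      apply Finset.sum_congr rfl
      intro k _
      ring
    rw [e1, e2] at h1
    have h2 : lmax * (α * μ i) ≤ lmax * (M i j * μ j) := by nlinarith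
    exact le_of_mul_le_mul_left h2 hlpos
  -- bounds on eps
  have heps_eq : ∀ i j, eps M μ i j = μ i / (M i j * μ j) := by
    intro i j
    unfold eps
    field_simp
  have heps_low : ∀ i j, α ≤ eps M μ i j := by
    intro i j
    rw [heps_eq, le_div_iff₀ (mul_pos (hpos i j) (hμ j))]
    have := hμlow i j
    linarith
  have heps_high : ∀ i j, eps M μ i j ≤ 1 / α := by
    intro i j
    rw [heps_eq, div_le_div_iff₀ (mul_pos (hpos i j) (hμ j)) hα]
    have := hμhigh i j
    nlinarith [hμ i, hpos i j, hμ j]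
  -- bound on locE
  have hloc : ∀ i j, locE M μ i j ≤ 1 / α - 1 := by
    intro i j
    unfold locE
    apply max_le
    · linarith [heps_high i j]
    · have h1 : 1 / eps M μ i j ≤ 1 / α := by
        apply one_div_le_one_div_of_le hα (heps_low i j)
      linarith
  set S' : Set ℝ := {x : ℝ | ∃ i j : Fin n, x = locE M μ i j} with hS'def
  have hdisc : disc M μ = sSup S' := rfl
  have hbdd' : ∀ x ∈ S', x ≤ 1 / α - 1 := by
    rintro x ⟨i, j, rfl⟩
    exact hloc i j
  have hzero : (0:ℝ) ∈ S' := by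
    refine ⟨i0, i0, ?_⟩
    have he : eps M μ i0 i0 = 1 := by
      unfold eps
      rw [hdiag, div_self (hμ i0).ne']
      norm_num
    unfold locE
    rw [he]
    norm_num
  constructor
  · rw [hdisc]
    exact le_csSup ⟨1 / α - 1, fun x hx => hbdd' x hx⟩ hzero
  · rw [hdisc]
    exact csSup_le ⟨0, hzero⟩ hbdd'
end

section
/- For a reciprocal positive matrix M with positive principal eigenvector μ (eigenvalue λ_max) and α = 1 − K(M), every entry of μ bounds each other: α m_{ij} μ_j ≤ μ_i ≤ (1/α) m_{ij} μ_j for all i, j. -/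
open Matrix Finset

lemma min_abs_lt_one_s5 {a b : ℝ} (ha : 0 < a) (hb : 0 < b) :
    min |1 - a / b| |1 - b / a| < 1 := by
  rcases le_total a b with h | h
  · have h1 : a / b ≤ 1 := (div_le_one hb).mpr h
    have h2 : 0 < a / b := div_pos ha hb
    calc min |1 - a / b| |1 - b / a| ≤ |1 - a / b| := min_le_left _ _
      _ = 1 - a / b := abs_of_nonneg (by linarith)
      _ < 1 := by linarith
  · have h1 : b / a ≤ 1 := (div_le_one ha).mpr h
    have h2 : 0 < b / a := div_pos hb ha
    calc min |1 - a / b| |1 - b / a| ≤ |1 - b / a| := min_le_right _ _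
      _ = 1 - b / a := abs_of_nonneg (by linarith)
      _ < 1 := by linarith

lemma bound_of_min_le {a b K : ℝ} (ha : 0 < a) (hb : 0 < b) (hK0 : 0 ≤ K) (hK1 : K < 1)
    (h : min |1 - a / b| |1 - b / a| ≤ K) :
    (1 - K) * a ≤ b ∧ b ≤ (1 / (1 - K)) * a := by
  have hα : (0:ℝ) < 1 - K := by linarith
  have hdiv : (1:ℝ) / (1 - K) * a = a / (1 - K) := by ring
  rcases min_le_iff.mp h with h | h
  · obtain ⟨h1, h2⟩ := abs_le.mp h
    have hab1 : a / b ≤ 1 + K := by linarith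
    have hab2 : 1 - K ≤ a / b := by linarith
    have ha1 : a ≤ (1 + K) * b := by
      have := (div_le_iff₀ hb).mp hab1; linarith
    have ha2 : (1 - K) * b ≤ a := by
      have := (le_div_iff₀ hb).mp hab2; linarith
    constructor
    · nlinarith [mul_le_mul_of_nonneg_left ha1 hα.le, sq_nonneg K, hb.le]
    · rw [hdiv, le_div_iff₀ hα]; linarith
  · obtain ⟨h1, h2⟩ := abs_le.mp h
    have hab1 : b / a ≤ 1 + K := by linarith
    have hab2 : 1 - K ≤ b / a := by linarith
    have hb1 : b ≤ (1 + K) * a := by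
      have := (div_le_iff₀ ha).mp hab1; linarith
    have hb2 : (1 - K) * a ≤ b := by
      have := (le_div_iff₀ ha).mp hab2; linarith
    refine ⟨hb2, ?_⟩
    rw [hdiv, le_div_iff₀ hα]
    nlinarith [mul_le_mul_of_nonneg_right hb1 hα.le, sq_nonneg K, ha.le]

theorem eigvec_entries_bound {n : ℕ} (hn : 2 < n) (M : Matrix (Fin n) (Fin n) ℝ)
    (hpos : ∀ i j, 0 < M i j) (hrec : ∀ i j, M i j = 1 / M j i)
    (μ : Fin n → ℝ) (hμ : ∀ i, 0 < μ i) (lmax : ℝ)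
    (hev : M.mulVec μ = lmax • μ) :
    ∀ i j : Fin n, (1 - kocz M) * M i j * μ j ≤ μ i ∧
      μ i ≤ (1 / (1 - kocz M)) * M i j * μ j := by
  have hn0 : 0 < n := by omega
  set K := kocz M with hKdef
  set S : Set ℝ := {x : ℝ | ∃ i j k : Fin n, i ≠ j ∧ j ≠ k ∧ i ≠ k ∧
    x = min |1 - M i j / (M i k * M k j)| |1 - (M i k * M k j) / M i j|} with hSdef
  have hfin : S.Finite := by
    apply Set.Finite.subset (Set.finite_range
      (fun p : Fin n × Fin n × Fin n =>
        min |1 - M p.1 p.2.1 / (M p.1 p.2.2 * M p.2.2 p.2.1)|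
            |1 - (M p.1 p.2.2 * M p.2.2 p.2.1) / M p.1 p.2.1|))
    rintro x ⟨i, j, k, _, _, _, rfl⟩
    exact ⟨(i, j, k), rfl⟩
  have hne : S.Nonempty := by
    refine ⟨_, ⟨⟨0, by omega⟩, ⟨1, by omega⟩, ⟨2, by omega⟩, ?_, ?_, ?_, rfl⟩⟩ <;>
      simp [Fin.ext_iff]
  have hmem : K ∈ S := by
    have : sSup S ∈ S := hne.csSup_mem hfin
    exact this
  have hK0 : 0 ≤ K := by
    obtain ⟨i, j, k, _, _, _, hx⟩ := hmem
    rw [hx]; exact le_min (abs_nonneg _) (abs_nonneg _)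
  have hK1 : K < 1 := by
    obtain ⟨i, j, k, _, _, _, hx⟩ := hmem
    rw [hx]; exact min_abs_lt_one_s5 (hpos i j) (mul_pos (hpos i k) (hpos k j))
  have hα : (0:ℝ) < 1 - K := by linarith
  have hdiag : ∀ i, M i i = 1 := by
    intro i
    have h := hrec i i
    have hp := hpos i i
    have h2 : (M i i - 1) * (M i i + 1) = 0 := by
      field_simp at h
      nlinarith [h]
    rcases mul_eq_zero.mp h2 with h3 | h3 <;> linarith
  have key : ∀ i j k : Fin n, i ≠ j →
      (1 - K) * M i j ≤ M i k * M k j ∧ M i k * M k j ≤ (1 / (1 - K)) * M i j := by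
    intro i j k hij
    by_cases hki : k = i
    · subst hki
      rw [hdiag k, one_mul]
      have h1 : 1 ≤ 1 / (1 - K) := by
        rw [le_div_iff₀ hα]; linarith
      constructor
      · nlinarith [hpos k j]
      · nlinarith [hpos k j]
    · by_cases hkj : k = j
      · subst hkj
        rw [hdiag k, mul_one]
        have h1 : 1 ≤ 1 / (1 - K) := by
          rw [le_div_iff₀ hα]; linarith
        constructor
        · nlinarith [hpos i k]
        · nlinarith [hpos i k]
      · have hmemS : min |1 - M i j / (M i k * M k j)| |1 - (M i k * M k j) / M i j| ∈ S :=
          ⟨i, j, k, hij, fun h => hkj h.symm, fun h => hki h.symm, rfl⟩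
        have hle : min |1 - M i j / (M i k * M k j)| |1 - (M i k * M k j) / M i j| ≤ K :=
          le_csSup hfin.bddAbove hmemS
        exact bound_of_min_le (hpos i j) (mul_pos (hpos i k) (hpos k j)) hK0 hK1 hle
  have hrow : ∀ p, ∑ k, M p k * μ k = lmax * μ p := by
    intro p
    have h := congrFun hev p
    simpa [mulVec, dotProduct] using h
  have hlpos : 0 < lmax := by
    have h := hrow ⟨0, hn0⟩
    have hs : 0 < ∑ k, M ⟨0, hn0⟩ k * μ k := by
      apply Finset.sum_pos (fun k _ => mul_pos (hpos _ k) (hμ k))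
      exact ⟨⟨0, hn0⟩, Finset.mem_univ _⟩
    have hm := hμ ⟨0, hn0⟩
    nlinarith [h]
  intro i j
  by_cases hij : i = j
  · subst hij
    rw [hdiag i]
    have h1 : 1 ≤ 1 / (1 - K) := by
      rw [le_div_iff₀ hα]; linarith
    constructor
    · nlinarith [hμ i]
    · nlinarith [hμ i]
  · constructor
    · have lower : ∑ k, ((1 - K) * M i j) * (M j k * μ k) ≤ ∑ k, M i k * μ k := by
        apply Finset.sum_le_sum
        intro k _
        have hk := (key i j k hij).1
        have hkjp := hpos k j
        have hmjk : M j k = 1 / M k j := hrec j k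
        have hdivle : (1 - K) * M i j / M k j ≤ M i k :=
          (div_le_iff₀ hkjp).mpr (by linarith)
        calc ((1 - K) * M i j) * (M j k * μ k)
            = ((1 - K) * M i j / M k j) * μ k := by rw [hmjk]; ring
          _ ≤ M i k * μ k := mul_le_mul_of_nonneg_right hdivle (hμ k).le
      rw [← Finset.mul_sum, hrow i, hrow j] at lower
      have h2 : lmax * ((1 - K) * M i j * μ j) ≤ lmax * μ i := by
        calc lmax * ((1 - K) * M i j * μ j) = (1 - K) * M i j * (lmax * μ j) := by ring
          _ ≤ lmax * μ i := lower
      exact le_of_mul_le_mul_left h2 hlpos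
    · have upper : ∑ k, M i k * μ k ≤ ∑ k, ((1 / (1 - K)) * M i j) * (M j k * μ k) := by
        apply Finset.sum_le_sum
        intro k _
        have hk := (key i j k hij).2
        have hkjp := hpos k j
        have hmjk : M j k = 1 / M k j := hrec j k
        have hdivle : M i k ≤ (1 / (1 - K)) * M i j / M k j :=
          (le_div_iff₀ hkjp).mpr (by linarith)
        calc M i k * μ k
            ≤ ((1 / (1 - K)) * M i j / M k j) * μ k :=
              mul_le_mul_of_nonneg_right hdivle (hμ k).le
          _ = ((1 / (1 - K)) * M i j) * (M j k * μ k) := by rw [hmjk]; ring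
      rw [← Finset.mul_sum, hrow i, hrow j] at upper
      have h2 : lmax * μ i ≤ lmax * ((1 / (1 - K)) * M i j * μ j) := by
        calc lmax * μ i ≤ (1 / (1 - K)) * M i j * (lmax * μ j) := upper
          _ = lmax * ((1 / (1 - K)) * M i j * μ j) := by ring
      exact le_of_mul_le_mul_left h2 hlpos
end

section
/- For any reciprocal n×n positive matrix M (n > 2) with α = 1 − K(M), the principal eigenvalue λ_max satisfies (n−1)(α−1) + n ≤ λ_max ≤ (n−1)(1/α − 1) + n. -/
open Matrix Finset

theorem eigenvalue_bound {n : ℕ} (hn : 2 < n) (M : Matrix (Fin n) (Fin n) ℝ)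
    (hpos : ∀ i j, 0 < M i j) (hrec : ∀ i j, M i j = 1 / M j i)
    (μ : Fin n → ℝ) (hμ : ∀ i, 0 < μ i) (lmax : ℝ)
    (hev : M.mulVec μ = lmax • μ) :
    ((n : ℝ) - 1) * ((1 - kocz M) - 1) + n ≤ lmax ∧
      lmax ≤ ((n : ℝ) - 1) * (1 / (1 - kocz M) - 1) + n := by
  have hn3 : (3 : ℝ) ≤ (n : ℝ) := by exact_mod_cast hn
  set s : Set ℝ := {x : ℝ | ∃ i j k : Fin n, i ≠ j ∧ j ≠ k ∧ i ≠ k ∧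
    x = min |1 - M i j / (M i k * M k j)| |1 - (M i k * M k j) / M i j|} with hs
  have hKdef : kocz M = sSup s := rfl
  -- finiteness and boundedness of s
  have hsfin : s.Finite := by
    have : s ⊆ Set.range (fun p : Fin n × Fin n × Fin n =>
        min |1 - M p.1 p.2.1 / (M p.1 p.2.2 * M p.2.2 p.2.1)|
          |1 - (M p.1 p.2.2 * M p.2.2 p.2.1) / M p.1 p.2.1|) := by
      rintro x ⟨i, j, k, -, -, -, rfl⟩
      exact ⟨(i, j, k), rfl⟩
    exact Set.Finite.subset (Set.finite_range _) this
  have hbdd : BddAbove s := hsfin.bddAbove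
  -- distinct indices
  have h0 : (⟨0, by omega⟩ : Fin n) ≠ ⟨1, by omega⟩ := by
    intro h; simpa using congrArg Fin.val h
  have h1 : (⟨1, by omega⟩ : Fin n) ≠ ⟨2, by omega⟩ := by
    intro h; simpa using congrArg Fin.val h
  have h2 : (⟨0, by omega⟩ : Fin n) ≠ ⟨2, by omega⟩ := by
    intro h; simpa using congrArg Fin.val h
  have hne : s.Nonempty := ⟨_, ⟨_, _, _, h0, h1, h2, rfl⟩⟩
  have hmem : ∀ i j k : Fin n, i ≠ j → j ≠ k → i ≠ k →
      min |1 - M i j / (M i k * M k j)| |1 - (M i k * M k j) / M i j| ≤ kocz M := by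
    intro i j k hij hjk hik
    exact le_csSup hbdd ⟨i, j, k, hij, hjk, hik, rfl⟩
  have hK0 : 0 ≤ kocz M :=
    le_trans (le_min (abs_nonneg _) (abs_nonneg _)) (hmem _ _ _ h0 h1 h2)
  have hK1 : kocz M < 1 := by
    rw [hKdef]
    obtain ⟨i, j, k, -, -, -, he⟩ := hne.csSup_mem hsfin
    rw [he]
    have hd : 0 < M i k * M k j := mul_pos (hpos i k) (hpos k j)
    rcases le_total (M i j / (M i k * M k j)) 1 with h | h
    · calc min |1 - M i j / (M i k * M k j)| |1 - (M i k * M k j) / M i j|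
          ≤ |1 - M i j / (M i k * M k j)| := min_le_left _ _
        _ = 1 - M i j / (M i k * M k j) := abs_of_nonneg (by linarith)
        _ < 1 := by have := div_pos (hpos i j) hd; linarith
    · have h' : (M i k * M k j) / M i j ≤ 1 := by
        rw [div_le_one (hpos i j)]
        exact (one_le_div hd).mp h
      calc min |1 - M i j / (M i k * M k j)| |1 - (M i k * M k j) / M i j|
          ≤ |1 - (M i k * M k j) / M i j| := min_le_right _ _
        _ = 1 - (M i k * M k j) / M i j := abs_of_nonneg (by linarith)
        _ < 1 := by have := div_pos hd (hpos i j); linarith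
  set K := kocz M with hK
  set α : ℝ := 1 - K with hα
  have hα0 : 0 < α := by simp [hα]; linarith
  have hα1 : α ≤ 1 := by simp [hα]; linarith
  -- helper: from |1 - x/y| ≤ K, both directions
  have habs : ∀ x y : ℝ, 0 < x → 0 < y → |1 - x / y| ≤ K → α * y ≤ x ∧ α * x ≤ y := by
    intro x y hx hy h
    obtain ⟨h1', h2'⟩ := abs_le.mp h
    have hl : α ≤ x / y := by simp [hα]; linarith
    have hr : x / y ≤ 1 + K := by linarith
    have hl' : α * y ≤ x := by
      have := (le_div_iff₀ hy).mp hl; linarith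
    refine ⟨hl', ?_⟩
    have hxy : x ≤ (1 + K) * y := by
      have := (div_le_iff₀ hy).mp hr; linarith
    nlinarith [mul_pos hx hy]
  have hrecmul : ∀ i j : Fin n, M i j * M j i = 1 := by
    intro i j
    rw [hrec i j]
    rw [one_div, inv_mul_cancel₀ (hpos j i).ne']
  have hone : ∀ i : Fin n, M i i = 1 := by
    intro i
    have := hrecmul i i
    nlinarith [hpos i i]
  -- key triad inequalities
  have key : ∀ i j k : Fin n, i ≠ j → j ≠ k → i ≠ k →
      α * (M i j * M j k) ≤ M i k ∧ α * M i k ≤ M i j * M j k := by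
    intro i j k hij hjk hik
    have hd : 0 < M i k * M k j := mul_pos (hpos i k) (hpos k j)
    have hjk' : 0 < M j k := hpos j k
    have hmul : M k j * M j k = 1 := hrecmul k j
    have H : α * (M i k * M k j) ≤ M i j ∧ α * M i j ≤ M i k * M k j := by
      rcases min_le_iff.mp (hmem i j k hij hjk hik) with h | h
      · have := habs (M i j) (M i k * M k j) (hpos i j) hd h
        exact ⟨this.1, this.2⟩
      · have := habs (M i k * M k j) (M i j) hd (hpos i j) h
        exact ⟨this.2, this.1⟩
    have heq : M i k * M k j * M j k = M i k := by
      rw [mul_assoc, hmul, mul_one]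
    constructor
    · have := mul_le_mul_of_nonneg_right H.2 hjk'.le
      nlinarith
    · have := mul_le_mul_of_nonneg_right H.1 hjk'.le
      nlinarith
  -- eigen equations
  have heig : ∀ i, ∑ j, M i j * μ j = lmax * μ i := by
    intro i
    have := congrFun hev i
    simpa [Matrix.mulVec, dotProduct] using this
  have hA : ∀ i, ∑ k, M i k * μ k / μ i = lmax := by
    intro i
    rw [← Finset.sum_div, heig i, mul_div_assoc, div_self (hμ i).ne', mul_one]
  have hsq : ∀ i, ∑ k, ∑ j, M i j * M j k * μ k / μ i = lmax ^ 2 := by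
    intro i
    rw [Finset.sum_comm]
    have step : ∀ j : Fin n, ∑ k, M i j * M j k * μ k / μ i
        = M i j * (lmax * μ j) / μ i := by
      intro j
      rw [← heig j, Finset.mul_sum, Finset.sum_div]
      exact Finset.sum_congr rfl fun k _ => by ring
    rw [Finset.sum_congr rfl fun j _ => step j]
    have : ∑ j, M i j * (lmax * μ j) / μ i = lmax * ∑ j, M i j * μ j / μ i := by
      rw [Finset.mul_sum]
      exact Finset.sum_congr rfl fun j _ => by ring
    rw [this, hA i]
    ring
  -- fix row i0
  set i0 : Fin n := ⟨0, by omega⟩ with hi0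
  have hAii : M i0 i0 * μ i0 / μ i0 = 1 := by
    rw [hone, one_mul, div_self (hμ i0).ne']
  have hErase : ∑ k ∈ univ.erase i0, M i0 k * μ k / μ i0 = lmax - 1 := by
    have h := Finset.sum_erase_add univ (fun k => M i0 k * μ k / μ i0) (mem_univ i0)
    simp only [hAii, hA i0] at h
    linarith
  have hl1 : 1 < lmax := by
    have hpos' : 0 < ∑ k ∈ univ.erase i0, M i0 k * μ k / μ i0 := by
      apply Finset.sum_pos
      · intro k _
        exact div_pos (mul_pos (hpos i0 k) (hμ k)) (hμ i0)
      · refine ⟨⟨1, by omega⟩, ?_⟩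
        simp only [mem_erase, mem_univ, and_true]
        intro h; simpa [hi0] using congrArg Fin.val h
    linarith [hErase]
  have hki : ∑ j, M i0 j * M j i0 * μ i0 / μ i0 = (n : ℝ) := by
    have e : ∀ j : Fin n, M i0 j * M j i0 * μ i0 / μ i0 = 1 := by
      intro j
      rw [hrecmul, one_mul, div_self (hμ i0).ne']
    rw [Finset.sum_congr rfl fun j _ => e j]
    simp
  -- inner split for k ≠ i0
  have hinner : ∀ k : Fin n, k ≠ i0 →
      ∑ j, M i0 j * M j k * μ k / μ i0
        = 2 * (M i0 k * μ k / μ i0)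
          + ∑ j ∈ univ \ {i0, k}, M i0 j * M j k * μ k / μ i0 := by
    intro k hki0
    have hsd := Finset.sum_sdiff (f := fun j => M i0 j * M j k * μ k / μ i0)
      (subset_univ ({i0, k} : Finset (Fin n)))
    rw [Finset.sum_pair (Ne.symm hki0)] at hsd
    have e1 : M i0 i0 * M i0 k * μ k / μ i0 = M i0 k * μ k / μ i0 := by
      rw [hone, one_mul]
    have e2 : M i0 k * M k k * μ k / μ i0 = M i0 k * μ k / μ i0 := by
      rw [hone, mul_one]
    rw [e1, e2] at hsd
    linarith
  have hcard : ∀ k : Fin n, k ≠ i0 →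
      ((univ \ {i0, k} : Finset (Fin n)).card : ℝ) = (n : ℝ) - 2 := by
    intro k hki0
    rw [Finset.card_sdiff_of_subset (subset_univ _), Finset.card_pair (Ne.symm hki0),
      Finset.card_univ, Fintype.card_fin]
    have h2n : 2 ≤ n := by omega
    push_cast [Nat.cast_sub h2n]
    ring
  -- pointwise bounds on the "distinct triple" terms
  have hrest : ∀ k : Fin n, k ≠ i0 → ∀ j ∈ univ \ ({i0, k} : Finset (Fin n)),
      α * (M i0 j * M j k * μ k / μ i0) ≤ M i0 k * μ k / μ i0
        ∧ α * (M i0 k * μ k / μ i0) ≤ M i0 j * M j k * μ k / μ i0 := by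
    intro k hki0 j hj
    simp only [mem_sdiff, mem_univ, true_and, mem_insert, mem_singleton, not_or] at hj
    obtain ⟨hji0, hjk⟩ := hj
    obtain ⟨k1, k2⟩ := key i0 j k (Ne.symm hji0) hjk (Ne.symm hki0)
    have hb1 : α * (M i0 j * M j k) * μ k ≤ M i0 k * μ k :=
      mul_le_mul_of_nonneg_right k1 (hμ k).le
    have hb2 : α * M i0 k * μ k ≤ (M i0 j * M j k) * μ k :=
      mul_le_mul_of_nonneg_right k2 (hμ k).le
    constructor
    · calc α * (M i0 j * M j k * μ k / μ i0)
          = (α * (M i0 j * M j k) * μ k) / μ i0 := by ring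
        _ ≤ (M i0 k * μ k) / μ i0 := by
            exact div_le_div_of_nonneg_right hb1 (hμ i0).le
    · calc α * (M i0 k * μ k / μ i0)
          = (α * M i0 k * μ k) / μ i0 := by ring
        _ ≤ ((M i0 j * M j k) * μ k) / μ i0 := by
            exact div_le_div_of_nonneg_right hb2 (hμ i0).le
        _ = M i0 j * M j k * μ k / μ i0 := by ring
  -- summed bounds per k
  have hsumrest : ∀ k : Fin n, k ≠ i0 →
      α * (∑ j ∈ univ \ {i0, k}, M i0 j * M j k * μ k / μ i0)
          ≤ ((n : ℝ) - 2) * (M i0 k * μ k / μ i0)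
        ∧ ((n : ℝ) - 2) * (α * (M i0 k * μ k / μ i0))
          ≤ ∑ j ∈ univ \ {i0, k}, M i0 j * M j k * μ k / μ i0 := by
    intro k hki0
    constructor
    · rw [Finset.mul_sum]
      calc ∑ j ∈ univ \ {i0, k}, α * (M i0 j * M j k * μ k / μ i0)
          ≤ ∑ _j ∈ univ \ {i0, k}, M i0 k * μ k / μ i0 :=
            Finset.sum_le_sum fun j hj => (hrest k hki0 j hj).1
        _ = ((n : ℝ) - 2) * (M i0 k * μ k / μ i0) := by
            rw [Finset.sum_const, nsmul_eq_mul, hcard k hki0]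
    · calc ((n : ℝ) - 2) * (α * (M i0 k * μ k / μ i0))
          = ∑ _j ∈ univ \ {i0, k}, α * (M i0 k * μ k / μ i0) := by
            rw [Finset.sum_const, nsmul_eq_mul, hcard k hki0]
        _ ≤ ∑ j ∈ univ \ {i0, k}, M i0 j * M j k * μ k / μ i0 :=
            Finset.sum_le_sum fun j hj => (hrest k hki0 j hj).2
  -- global decomposition
  set P : ℝ := ∑ k ∈ univ.erase i0, ∑ j ∈ univ \ {i0, k}, M i0 j * M j k * μ k / μ i0
    with hP
  have hdecomp : lmax ^ 2 = (n : ℝ) + 2 * (lmax - 1) + P := by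
    have h := Finset.sum_erase_add univ
      (fun k => ∑ j, M i0 j * M j k * μ k / μ i0) (mem_univ i0)
    simp only [hki] at h
    rw [hsq i0] at h
    have h2 : ∑ k ∈ univ.erase i0, ∑ j, M i0 j * M j k * μ k / μ i0
        = ∑ k ∈ univ.erase i0, (2 * (M i0 k * μ k / μ i0)
            + ∑ j ∈ univ \ {i0, k}, M i0 j * M j k * μ k / μ i0) :=
      Finset.sum_congr rfl fun k hk => hinner k (Finset.mem_erase.mp hk).1
    rw [h2, Finset.sum_add_distrib, ← Finset.mul_sum, hErase] at h
    rw [← hP] at h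
    linarith
  have hPup : α * P ≤ ((n : ℝ) - 2) * (lmax - 1) := by
    rw [hP, Finset.mul_sum]
    calc ∑ k ∈ univ.erase i0, α * ∑ j ∈ univ \ {i0, k}, M i0 j * M j k * μ k / μ i0
        ≤ ∑ k ∈ univ.erase i0, ((n : ℝ) - 2) * (M i0 k * μ k / μ i0) :=
          Finset.sum_le_sum fun k hk => (hsumrest k (Finset.mem_erase.mp hk).1).1
      _ = ((n : ℝ) - 2) * (lmax - 1) := by rw [← Finset.mul_sum, hErase]
  have hPlo : ((n : ℝ) - 2) * α * (lmax - 1) ≤ P := by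
    rw [hP]
    calc ((n : ℝ) - 2) * α * (lmax - 1)
        = ∑ k ∈ univ.erase i0, ((n : ℝ) - 2) * (α * (M i0 k * μ k / μ i0)) := by
          rw [← Finset.mul_sum]
          have : ∑ k ∈ univ.erase i0, α * (M i0 k * μ k / μ i0)
              = α * (lmax - 1) := by rw [← Finset.mul_sum, hErase]
          rw [this]; ring
      _ ≤ _ := Finset.sum_le_sum fun k hk => (hsumrest k (Finset.mem_erase.mp hk).1).2
  -- conclude
  constructor
  · -- lower bound
    nlinarith [mul_pos hα0 (sub_pos.mpr hl1),
      mul_nonneg (mul_nonneg (sub_nonneg.mpr hn3) hα0.le) (sub_pos.mpr hl1).le]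
  · -- upper bound: first show α * lmax ≤ n - 1 + α
    have hmain : α * lmax ≤ (n : ℝ) - 1 + α := by
      nlinarith [mul_pos hα0 (sub_pos.mpr hl1), sq_nonneg (lmax - 1),
        mul_nonneg hα0.le (sub_pos.mpr hl1).le]
    have : lmax ≤ ((n : ℝ) - 1 + α) / α := by
      rw [le_div_iff₀ hα0]
      linarith [hmain]
    have heqB : ((n : ℝ) - 1 + α) / α = ((n : ℝ) - 1) * (1 / α - 1) + n := by
      field_simp
      ring
    linarith [this, heqB.le, heqB.ge]
end

section
/- If K(M) < 0.090909… (i.e. K(M) < 1/11), then Saaty's inconsistency index satisfies S(M) < 0.1. -/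
open Matrix Finset

theorem kocz_small_implies_saaty_small {n : ℕ} (hn : 2 < n)
    (M : Matrix (Fin n) (Fin n) ℝ)
    (hpos : ∀ i j, 0 < M i j) (hrec : ∀ i j, M i j = 1 / M j i)
    (μ : Fin n → ℝ) (hμ : ∀ i, 0 < μ i) (lmax : ℝ)
    (hev : M.mulVec μ = lmax • μ)
    (hK : kocz M < 1 / 11) :
    (lmax - n) / ((n : ℝ) - 1) < 0.1 := by
  have hn3 : (3:ℝ) ≤ (n:ℝ) := by exact_mod_cast hn
  -- diagonal entries are 1
  have hdiag : ∀ i, M i i = 1 := by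
    intro i
    have h := hrec i i
    have hp := hpos i i
    have h2 : M i i * M i i = 1 := by
      field_simp at h
      nlinarith [h]
    nlinarith [h2, hp]
  -- reciprocal products
  have hrecip : ∀ i j, M i j * M j i = 1 := by
    intro i j
    have h := hrec i j
    have hp := hpos j i
    rw [h]
    field_simp
  -- eigen equation componentwise
  have heig : ∀ i, ∑ j, M i j * μ j = lmax * μ i := by
    intro i
    have h := congrFun hev i
    simpa [Matrix.mulVec, dotProduct, smul_eq_mul] using h
  -- the Koczkodaj set and its boundedness
  have hbdd : BddAbove {x : ℝ | ∃ i j k : Fin n, i ≠ j ∧ j ≠ k ∧ i ≠ k ∧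
      x = min |1 - M i j / (M i k * M k j)| |1 - (M i k * M k j) / M i j|} := by
    refine ⟨1, fun x hx => ?_⟩
    obtain ⟨i, j, k, _, _, _, rfl⟩ := hx
    have h1 : 0 < M i j := hpos i j
    have h2 : 0 < M i k * M k j := mul_pos (hpos i k) (hpos k j)
    rcases le_total (M i j) (M i k * M k j) with h | h
    · refine le_trans (min_le_left _ _) (abs_le.mpr ⟨?_, ?_⟩)
      · have : M i j / (M i k * M k j) ≤ 1 := (div_le_one h2).mpr h
        linarith
      · have : 0 ≤ M i j / (M i k * M k j) := le_of_lt (div_pos h1 h2)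
        linarith
    · refine le_trans (min_le_right _ _) (abs_le.mpr ⟨?_, ?_⟩)
      · have : (M i k * M k j) / M i j ≤ 1 := (div_le_one h1).mpr h
        linarith
      · have : 0 ≤ (M i k * M k j) / M i j := le_of_lt (div_pos h2 h1)
        linarith
  -- triad bound
  have triad : ∀ i j k : Fin n, i ≠ j → j ≠ k → i ≠ k →
      M i k * M k j ≤ 11/10 * M i j := by
    intro i j k hij hjk hik
    have hmem : min |1 - M i j / (M i k * M k j)| |1 - (M i k * M k j) / M i j| ∈
        {x : ℝ | ∃ i j k : Fin n, i ≠ j ∧ j ≠ k ∧ i ≠ k ∧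
          x = min |1 - M i j / (M i k * M k j)| |1 - (M i k * M k j) / M i j|} :=
      ⟨i, j, k, hij, hjk, hik, rfl⟩
    have hlt : min |1 - M i j / (M i k * M k j)| |1 - (M i k * M k j) / M i j| < 1/11 :=
      lt_of_le_of_lt (le_csSup hbdd hmem) hK
    have h1 : 0 < M i j := hpos i j
    have h2 : 0 < M i k * M k j := mul_pos (hpos i k) (hpos k j)
    rcases min_lt_iff.mp hlt with h | h
    · rw [abs_lt] at h
      have h3 : (10:ℝ)/11 < M i j / (M i k * M k j) := by linarith [h.2]
      have h4 := (lt_div_iff₀ h2).mp h3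
      nlinarith
    · rw [abs_lt] at h
      have h3 : (M i k * M k j) / M i j < 12/11 := by linarith [h.1]
      have h4 := (div_lt_iff₀ h1).mp h3
      nlinarith
  -- fix the first index
  set i0 : Fin n := ⟨0, by omega⟩ with hi0
  -- the double-sum identity
  have hsq : lmax * (lmax * μ i0) = ∑ j, ∑ k, M i0 j * (M j k * μ k) := by
    rw [← heig i0, Finset.mul_sum]
    refine Finset.sum_congr rfl fun j _ => ?_
    rw [show lmax * (M i0 j * μ j) = M i0 j * (lmax * μ j) by ring, ← heig j,
      Finset.mul_sum]
  -- sum over the erased set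
  have erase_sum : ∑ k ∈ univ.erase i0, M i0 k * μ k = lmax * μ i0 - μ i0 := by
    have h : M i0 i0 * μ i0 + ∑ k ∈ univ.erase i0, M i0 k * μ k
        = ∑ k, M i0 k * μ k := Finset.add_sum_erase univ (fun k => M i0 k * μ k) (mem_univ i0)
    rw [heig i0, hdiag i0] at h
    linarith
  -- inner sum bound for j ≠ i0
  have hinner : ∀ j ∈ univ.erase i0, ∑ k, M i0 j * (M j k * μ k) ≤
      μ i0 + M i0 j * μ j + (11/10) * (lmax * μ i0 - μ i0 - M i0 j * μ j) := by
    intro j hj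
    have hji : j ≠ i0 := (Finset.mem_erase.mp hj).1
    have e1 : ∑ k, M i0 j * (M j k * μ k) =
        M i0 j * (M j i0 * μ i0) + ∑ k ∈ univ.erase i0, M i0 j * (M j k * μ k) :=
      (Finset.add_sum_erase univ (fun k => M i0 j * (M j k * μ k)) (mem_univ i0)).symm
    have e2 : ∑ k ∈ univ.erase i0, M i0 j * (M j k * μ k) =
        M i0 j * (M j j * μ j) + ∑ k ∈ (univ.erase i0).erase j, M i0 j * (M j k * μ k) :=
      (Finset.add_sum_erase (univ.erase i0) (fun k => M i0 j * (M j k * μ k)) hj).symm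
    have e3 : ∑ k ∈ (univ.erase i0).erase j, M i0 k * μ k
        = lmax * μ i0 - μ i0 - M i0 j * μ j := by
      have h : M i0 j * μ j + ∑ k ∈ (univ.erase i0).erase j, M i0 k * μ k
          = ∑ k ∈ univ.erase i0, M i0 k * μ k :=
        Finset.add_sum_erase (univ.erase i0) (fun k => M i0 k * μ k) hj
      rw [erase_sum] at h
      linarith
    have hrest : ∑ k ∈ (univ.erase i0).erase j, M i0 j * (M j k * μ k) ≤
        ∑ k ∈ (univ.erase i0).erase j, (11/10) * (M i0 k * μ k) := by
      refine Finset.sum_le_sum fun k hk => ?_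
      have hk1 : k ≠ j := (Finset.mem_erase.mp hk).1
      have hk2 : k ≠ i0 := (Finset.mem_erase.mp (Finset.mem_erase.mp hk).2).1
      have ht := triad i0 k j (Ne.symm hk2) hk1 (Ne.symm hji)
      nlinarith [hμ k, ht, hpos i0 j, hpos j k]
    have hrest2 : ∑ k ∈ (univ.erase i0).erase j, (11/10) * (M i0 k * μ k)
        = (11/10) * (lmax * μ i0 - μ i0 - M i0 j * μ j) := by
      rw [← Finset.mul_sum, e3]
    have hd1 : M i0 j * (M j i0 * μ i0) = μ i0 := by
      have h := hrecip i0 j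
      linear_combination μ i0 * h
    have hd2 : M i0 j * (M j j * μ j) = M i0 j * μ j := by rw [hdiag j]; ring
    rw [e1, e2, hd1, hd2]
    linarith [hrest, hrest2.le, hrest2.ge]
  -- assemble the outer sum
  have hcard : ((univ.erase i0).card : ℝ) = (n:ℝ) - 1 := by
    rw [Finset.card_erase_of_mem (mem_univ i0), Finset.card_univ, Fintype.card_fin]
    have : 1 ≤ n := by omega
    push_cast [Nat.cast_sub this]
    ring
  have houter : ∑ j ∈ univ.erase i0, ∑ k, M i0 j * (M j k * μ k) ≤
      ((n:ℝ) - 1) * (μ i0 + (11/10) * (lmax * μ i0 - μ i0))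
        + (-(1/10)) * (lmax * μ i0 - μ i0) := by
    refine le_trans (Finset.sum_le_sum hinner) (le_of_eq ?_)
    have : ∀ j, μ i0 + M i0 j * μ j + (11/10) * (lmax * μ i0 - μ i0 - M i0 j * μ j)
        = (μ i0 + (11/10) * (lmax * μ i0 - μ i0)) + (-(1/10)) * (M i0 j * μ j) := by
      intro j; ring
    rw [Finset.sum_congr rfl fun j _ => this j, Finset.sum_add_distrib,
      Finset.sum_const, ← Finset.mul_sum, erase_sum, nsmul_eq_mul, hcard]
  have hfirst : ∑ k, M i0 i0 * (M i0 k * μ k) = lmax * μ i0 := by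
    rw [hdiag i0]
    simpa using heig i0
  have htotal : lmax * (lmax * μ i0) ≤
      (2*lmax + (n:ℝ) - 2 + (11/10) * ((n:ℝ)-2) * (lmax - 1)) * μ i0 := by
    have hsplit : (∑ k, M i0 i0 * (M i0 k * μ k))
        + ∑ j ∈ univ.erase i0, ∑ k, M i0 j * (M j k * μ k)
        = ∑ j, ∑ k, M i0 j * (M j k * μ k) :=
      Finset.add_sum_erase univ (fun j => ∑ k, M i0 j * (M j k * μ k)) (mem_univ i0)
    have hring : lmax * μ i0 + (((n:ℝ) - 1) * (μ i0 + (11/10) * (lmax * μ i0 - μ i0))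
        + (-(1/10)) * (lmax * μ i0 - μ i0))
        = (2*lmax + (n:ℝ) - 2 + (11/10) * ((n:ℝ)-2) * (lmax - 1)) * μ i0 := by ring
    rw [hsq, ← hsplit, hfirst]
    linarith [houter, hring]
  -- cancel μ i0
  have key : lmax * lmax ≤ 2*lmax + (n:ℝ) - 2 + (11/10) * ((n:ℝ)-2) * (lmax - 1) := by
    have hp := hμ i0
    have h' : (lmax * lmax) * μ i0 ≤
        (2*lmax + (n:ℝ) - 2 + (11/10) * ((n:ℝ)-2) * (lmax - 1)) * μ i0 := by
      have hr : (lmax * lmax) * μ i0 = lmax * (lmax * μ i0) := by ring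
      linarith [htotal, hr.le, hr.ge]
    exact le_of_mul_le_mul_right h' hp
  -- conclude
  by_contra hcon
  push_neg at hcon
  have hden : (0:ℝ) < (n:ℝ) - 1 := by linarith
  have hL : (n:ℝ) + ((n:ℝ) - 1)/10 ≤ lmax := by
    rw [le_div_iff₀ hden] at hcon
    norm_num at hcon ⊢
    linarith
  nlinarith [key, sq_nonneg (lmax - ((11*(n:ℝ) - 1)/10)),
    mul_nonneg (sub_nonneg.mpr hL) (by linarith : (0:ℝ) ≤ (n:ℝ)), hn3]
end

section
/- (Preservation of Order of Intensity of Preference) Let M be a reciprocal positive matrix with positive principal eigenvector μ and K(M) its Koczkodaj index. If m_{ij}/m_{kl} > (1/(1 − K(M)))², with m_{ij} > m_{kl} > 1, then μ_i/μ_j > μ_k/μ_l. -/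
open Matrix Finset

theorem poip_condition {n : ℕ} (hn : 2 < n) (M : Matrix (Fin n) (Fin n) ℝ)
    (hpos : ∀ i j, 0 < M i j) (hrec : ∀ i j, M i j = 1 / M j i)
    (μ : Fin n → ℝ) (hμ : ∀ i, 0 < μ i) (lmax : ℝ)
    (hev : M.mulVec μ = lmax • μ)
    (i j k l : Fin n)
    (h : M i j / M k l > (1 / (1 - kocz M)) ^ 2)
    (h1 : M i j > M k l) (h2 : M k l > 1) :
    μ i / μ j > μ k / μ l := by
  set S : Set ℝ := {x : ℝ | ∃ i j k : Fin n, i ≠ j ∧ j ≠ k ∧ i ≠ k ∧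
    x = min |1 - M i j / (M i k * M k j)| |1 - (M i k * M k j) / M i j|} with hS
  have hkocz : kocz M = sSup S := rfl
  -- diagonal entries are 1
  have hMii : ∀ p : Fin n, M p p = 1 := by
    intro p
    have hp := hpos p p
    have h0 := hrec p p
    rw [eq_div_iff hp.ne'] at h0
    have h2 : (M p p - 1) * (M p p + 1) = 0 := by linear_combination h0
    rcases mul_eq_zero.mp h2 with h3 | h3 <;> linarith
  -- S is finite
  have hSfin : S.Finite := by
    apply Set.Finite.subset (Set.finite_range
      (fun t : Fin n × Fin n × Fin n =>
        min |1 - M t.1 t.2.1 / (M t.1 t.2.2 * M t.2.2 t.2.1)|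
          |1 - (M t.1 t.2.2 * M t.2.2 t.2.1) / M t.1 t.2.1|))
    rintro x ⟨p, q, r, _, _, _, rfl⟩
    exact ⟨(p, q, r), rfl⟩
  -- S is nonempty
  have hSne : S.Nonempty := by
    refine ⟨_, ⟨⟨0, by omega⟩, ⟨1, by omega⟩, ⟨2, by omega⟩, ?_, ?_, ?_, rfl⟩⟩ <;>
      simp [Fin.ext_iff]
  have hbdd : BddAbove S := hSfin.bddAbove
  have hKmem : kocz M ∈ S := by rw [hkocz]; exact hSne.csSup_mem hSfin
  -- bounds on K
  have hK0 : 0 ≤ kocz M := by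
    obtain ⟨p, q, r, _, _, _, hx⟩ := hKmem
    rw [hx]; exact le_min (abs_nonneg _) (abs_nonneg _)
  have hK1 : kocz M < 1 := by
    obtain ⟨p, q, r, _, _, _, hx⟩ := hKmem
    have hD : 0 < M p r * M r q := mul_pos (hpos p r) (hpos r q)
    have hM : 0 < M p q := hpos p q
    rcases le_or_gt (M p q / (M p r * M r q)) 1 with hc | hc
    · have ha : |1 - M p q / (M p r * M r q)| < 1 := by
        rw [abs_of_nonneg (by linarith)]
        have : 0 < M p q / (M p r * M r q) := div_pos hM hD
        linarith
      calc kocz M ≤ |1 - M p q / (M p r * M r q)| := hx ▸ min_le_left _ _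
        _ < 1 := ha
    · have hlt : (M p r * M r q) / M p q < 1 := by
        rw [div_lt_one hM]
        rw [lt_div_iff₀ hD] at hc
        linarith
      have ha : |1 - (M p r * M r q) / M p q| < 1 := by
        rw [abs_of_nonneg (by linarith)]
        have : 0 < (M p r * M r q) / M p q := div_pos hD hM
        linarith
      calc kocz M ≤ |1 - (M p r * M r q) / M p q| := hx ▸ min_le_right _ _
        _ < 1 := ha
  set t : ℝ := 1 - kocz M with htdef
  have ht : 0 < t := by simp only [htdef]; linarith
  have ht1 : t ≤ 1 := by simp only [htdef]; linarith
  -- key triple bound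
  have key : ∀ p q r : Fin n, p ≠ q → q ≠ r → p ≠ r →
      t * (M p r * M r q) ≤ M p q ∧ t * M p q ≤ M p r * M r q := by
    intro p q r hpq hqr hpr
    have hD : 0 < M p r * M r q := mul_pos (hpos p r) (hpos r q)
    have hM : 0 < M p q := hpos p q
    have hmem : min |1 - M p q / (M p r * M r q)| |1 - (M p r * M r q) / M p q| ∈ S :=
      ⟨p, q, r, hpq, hqr, hpr, rfl⟩
    have hle : min |1 - M p q / (M p r * M r q)| |1 - (M p r * M r q) / M p q| ≤ kocz M := by
      rw [hkocz]; exact le_csSup hbdd hmem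
    rcases min_le_iff.mp hle with hc | hc
    · have h' := abs_le.mp hc
      have e1 : M p q ≤ (1 + kocz M) * (M p r * M r q) := by
        have : M p q / (M p r * M r q) ≤ 1 + kocz M := by linarith [h'.1]
        rw [div_le_iff₀ hD] at this; linarith
      have e2 : (1 - kocz M) * (M p r * M r q) ≤ M p q := by
        have : 1 - kocz M ≤ M p q / (M p r * M r q) := by linarith [h'.2]
        rw [le_div_iff₀ hD] at this; linarith
      constructor
      · simpa [htdef] using e2
      · have := mul_le_mul_of_nonneg_left e1 ht.le
        nlinarith [mul_nonneg (mul_nonneg (le_of_lt (hpos p r)) (le_of_lt (hpos r q)))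
          (mul_self_nonneg (kocz M))]
    · have h' := abs_le.mp hc
      have e1 : M p r * M r q ≤ (1 + kocz M) * M p q := by
        have : (M p r * M r q) / M p q ≤ 1 + kocz M := by linarith [h'.1]
        rw [div_le_iff₀ hM] at this; linarith
      have e2 : (1 - kocz M) * M p q ≤ M p r * M r q := by
        have : 1 - kocz M ≤ (M p r * M r q) / M p q := by linarith [h'.2]
        rw [le_div_iff₀ hM] at this; linarith
      constructor
      · have := mul_le_mul_of_nonneg_left e1 ht.le
        nlinarith [mul_nonneg (le_of_lt hM) (mul_self_nonneg (kocz M))]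
      · simpa [htdef] using e2
  -- eigenvalue equation
  have hsum : ∀ p : Fin n, ∑ s, M p s * μ s = lmax * μ p := by
    intro p
    have := congrFun hev p
    simpa [Matrix.mulVec, dotProduct, smul_eq_mul] using this
  have hl : 0 < lmax := by
    have hpos' : 0 < ∑ s, M i s * μ s :=
      Finset.sum_pos (fun s _ => mul_pos (hpos i s) (hμ s)) ⟨i, Finset.mem_univ i⟩
    rw [hsum i] at hpos'
    rcases mul_pos_iff.mp hpos' with ⟨h', _⟩ | ⟨_, h'⟩
    · exact h'
    · linarith [hμ i]
  -- pairwise lower bound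
  have lower : ∀ p q : Fin n, p ≠ q → t * (M p q * μ q) ≤ μ p := by
    intro p q hpq
    have hterm : ∀ s : Fin n, t * (M p q * (M q s * μ s)) ≤ M p s * μ s := by
      intro s
      rcases eq_or_ne s p with rfl | hsp
      · have hqs : M q s = 1 / M s q := hrec q s
        rw [hMii s, hqs, one_mul]
        have hne := (hpos s q).ne'
        have heq : M s q * (1 / M s q * μ s) = μ s := by
          field_simp
        rw [heq]
        nlinarith [hμ s]
      rcases eq_or_ne s q with rfl | hsq
      · rw [hMii s]
        nlinarith [mul_pos (hpos p s) (hμ s)]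
      · have hk := (key p s q hsp.symm hsq hpq).1
        nlinarith [mul_le_mul_of_nonneg_right hk (hμ s).le]
    have hsumineq : t * (M p q * (lmax * μ q)) ≤ lmax * μ p := by
      rw [← hsum p, ← hsum q]
      simp only [Finset.mul_sum]
      exact Finset.sum_le_sum fun s _ => hterm s
    have h' : lmax * (t * (M p q * μ q)) ≤ lmax * μ p := by nlinarith [hsumineq]
    exact le_of_mul_le_mul_left h' hl
  -- pairwise upper bound
  have upper : ∀ p q : Fin n, p ≠ q → t * μ p ≤ M p q * μ q := by
    intro p q hpq
    have hterm : ∀ s : Fin n, t * (M p s * μ s) ≤ M p q * (M q s * μ s) := by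
      intro s
      rcases eq_or_ne s p with rfl | hsp
      · have hqs : M q s = 1 / M s q := hrec q s
        rw [hMii s, hqs]
        have hne := (hpos s q).ne'
        have heq : M s q * (1 / M s q * μ s) = μ s := by field_simp
        rw [heq, one_mul]
        nlinarith [hμ s]
      rcases eq_or_ne s q with rfl | hsq
      · rw [hMii s]
        nlinarith [mul_pos (hpos p s) (hμ s)]
      · have hk := (key p s q hsp.symm hsq hpq).2
        nlinarith [mul_le_mul_of_nonneg_right hk (hμ s).le]
    have hsumineq : t * (lmax * μ p) ≤ M p q * (lmax * μ q) := by
      rw [← hsum p, ← hsum q]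
      simp only [Finset.mul_sum]
      exact Finset.sum_le_sum fun s _ => hterm s
    have h' : lmax * (t * μ p) ≤ lmax * (M p q * μ q) := by nlinarith [hsumineq]
    exact le_of_mul_le_mul_left h' hl
  -- i ≠ j and k ≠ l
  have hij : i ≠ j := by
    rintro rfl
    rw [hMii i] at h1
    linarith
  have hkl : k ≠ l := by
    rintro rfl
    rw [hMii k] at h2
    linarith
  have A := lower i j hij
  have B := upper k l hkl
  -- convert h
  have ht2 : M k l < t ^ 2 * M i j := by
    have hkl' : 0 < M k l := hpos k l
    have hpow : (1 / t) ^ 2 = 1 / t ^ 2 := by rw [div_pow, one_pow]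
    rw [gt_iff_lt, hpow, div_lt_div_iff₀ (pow_pos ht 2) hkl'] at h
    linarith
  rw [gt_iff_lt, div_lt_div_iff₀ (hμ l) (hμ j)]
  have s1 : t * μ k * μ j ≤ M k l * μ l * μ j :=
    mul_le_mul_of_nonneg_right B (hμ j).le
  have s2 : M k l * (μ l * μ j) < t ^ 2 * M i j * (μ l * μ j) :=
    mul_lt_mul_of_pos_right ht2 (mul_pos (hμ l) (hμ j))
  have s3 : t * (M i j * μ j) * μ l ≤ μ i * μ l :=
    mul_le_mul_of_nonneg_right A (hμ l).le
  have s4 := mul_le_mul_of_nonneg_left s3 ht.le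
  have sfin : t * (μ k * μ j) < t * (μ i * μ l) := by linarith
  exact lt_of_mul_lt_mul_left sfin ht.le
end

section
/- Suppose μ is a positive vector, M a reciprocal positive matrix, and the global discrepancy satisfies D(M,μ) ≤ δ for some δ > 0. If m_{ij} > δ + 1, then μ_i > μ_j. -/
open Matrix Finset

theorem pop_from_disc {n : ℕ} (M : Matrix (Fin n) (Fin n) ℝ)
    (hpos : ∀ i j, 0 < M i j) (hrec : ∀ i j, M i j = 1 / M j i)
    (μ : Fin n → ℝ) (hμ : ∀ i, 0 < μ i)
    (δ : ℝ) (hδ : 0 < δ) (hD : disc M μ ≤ δ)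
    (i j : Fin n) (h : M i j > δ + 1) :
    μ i > μ j := by
  have hset : {x : ℝ | ∃ i j : Fin n, x = locE M μ i j} =
      Set.range (fun p : Fin n × Fin n => locE M μ p.1 p.2) := by
    ext x
    constructor
    · rintro ⟨a, b, rfl⟩; exact ⟨(a, b), rfl⟩
    · rintro ⟨⟨a, b⟩, rfl⟩; exact ⟨a, b, rfl⟩
  have hbdd : BddAbove {x : ℝ | ∃ i j : Fin n, x = locE M μ i j} := by
    rw [hset]; exact (Set.finite_range _).bddAbove
  have hmem : locE M μ i j ∈ {x : ℝ | ∃ i j : Fin n, x = locE M μ i j} := ⟨i, j, rfl⟩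
  have hle : locE M μ i j ≤ δ := le_trans (le_csSup hbdd hmem) hD
  have h2 : 1 / eps M μ i j - 1 ≤ δ := le_trans (le_max_right _ _) hle
  have hMpos := hpos i j
  have hμi := hμ i
  have hμj := hμ j
  have heps : eps M μ i j = μ i / (M i j * μ j) := by
    unfold eps; field_simp
  have hepspos : 0 < eps M μ i j := by
    rw [heps]; positivity
  have hinv : 1 / eps M μ i j = M i j * μ j / μ i := by
    rw [heps]; field_simp
  rw [hinv] at h2
  have h3 : M i j * μ j ≤ (δ + 1) * μ i := by
    have := (div_le_iff₀ hμi).mp (by linarith : M i j * μ j / μ i ≤ δ + 1)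
    linarith
  have h4 : (δ + 1) * μ i < M i j * μ i := by
    exact mul_lt_mul_of_pos_right h hμi
  have h5 : M i j * μ j < M i j * μ i := by linarith
  exact lt_of_mul_lt_mul_left h5 hMpos.le
end

section
/- Suppose μ is a positive vector, M a reciprocal positive matrix, and D(M,μ) ≤ δ for some δ > 0. If m_{ij}/m_{kl} > (δ + 1)² and m_{ij} > m_{kl} > 1, then μ_i/μ_j > μ_k/μ_l. -/
open Matrix Finset

/-!
Since `μ i / μ j = ε(i,j) * m_ij` and `D(M,μ) ≤ δ` confines every `ε(i,j)` to
`[1/(1+δ), 1+δ]`, we get `μ i / μ j ≥ m_ij / (1+δ) > (1+δ) m_kl ≥ μ k / μ l`.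
-/

lemma locE_le_disc {n : ℕ} (M : Matrix (Fin n) (Fin n) ℝ) (μ : Fin n → ℝ) (i j : Fin n) :
    locE M μ i j ≤ disc M μ :=
  le_csSup ((Set.finite_range fun p : Fin n × Fin n => locE M μ p.1 p.2).subset
    (by rintro _ ⟨a, b, rfl⟩; exact ⟨(a, b), rfl⟩)).bddAbove ⟨i, j, rfl⟩

section eps

variable {n : ℕ} {M : Matrix (Fin n) (Fin n) ℝ} {μ : Fin n → ℝ} {i j : Fin n}

lemma eps_pos (hM : 0 < M i j) (hi : 0 < μ i) (hj : 0 < μ j) : 0 < eps M μ i j := by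
  unfold eps; positivity

lemma eps_mul_entry (hM : M i j ≠ 0) : eps M μ i j * M i j = μ i / μ j := by
  unfold eps; field_simp

lemma eps_le_of_locE_le {δ : ℝ} (h : locE M μ i j ≤ δ) : eps M μ i j ≤ 1 + δ := by
  have := (le_max_left _ _).trans h; linarith

lemma one_le_mul_eps_of_locE_le {δ : ℝ} (hε : 0 < eps M μ i j) (h : locE M μ i j ≤ δ) :
    1 ≤ (1 + δ) * eps M μ i j := by
  have : 1 / eps M μ i j ≤ 1 + δ := by have := (le_max_right _ _).trans h; linarith
  rwa [div_le_iff₀ hε] at this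

end eps

theorem poip_from_disc_general {n : ℕ} (M : Matrix (Fin n) (Fin n) ℝ)
    (hpos : ∀ i j, 0 < M i j)
    (μ : Fin n → ℝ) (hμ : ∀ i, 0 < μ i)
    (δ : ℝ) (hD : disc M μ ≤ δ)
    (i j k l : Fin n)
    (h : M i j / M k l > (δ + 1) ^ 2) :
    μ i / μ j > μ k / μ l := by
  have hεij := eps_pos (hpos i j) (hμ i) (hμ j)
  have hεkl := eps_pos (hpos k l) (hμ k) (hμ l)
  have hij := (locE_le_disc M μ i j).trans hD
  have hkl := (locE_le_disc M μ k l).trans hD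
  have hεkl_le := eps_le_of_locE_le hkl
  have hεij_ge := one_le_mul_eps_of_locE_le hεij hij
  have hgap : (δ + 1) ^ 2 * M k l < M i j := (lt_div_iff₀ (hpos k l)).1 h
  calc μ k / μ l = eps M μ k l * M k l := (eps_mul_entry (hpos k l).ne').symm
    _ ≤ (1 + δ) * M k l := by gcongr; exact (hpos k l).le
    _ < eps M μ i j * M i j := by
      have h1δ : 0 < 1 + δ := hεkl.trans_le hεkl_le
      refine lt_of_mul_lt_mul_left ?_ h1δ.le
      calc (1 + δ) * ((1 + δ) * M k l) = (δ + 1) ^ 2 * M k l := by ring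
        _ < M i j := hgap
        _ ≤ (1 + δ) * eps M μ i j * M i j := le_mul_of_one_le_left (hpos i j).le hεij_ge
        _ = (1 + δ) * (eps M μ i j * M i j) := by ring
    _ = μ i / μ j := eps_mul_entry (hpos i j).ne'

theorem poip_from_disc {n : ℕ} (M : Matrix (Fin n) (Fin n) ℝ)
    (hpos : ∀ i j, 0 < M i j) (hrec : ∀ i j, M i j = 1 / M j i)
    (μ : Fin n → ℝ) (hμ : ∀ i, 0 < μ i)
    (δ : ℝ) (hδ : 0 < δ) (hD : disc M μ ≤ δ)
    (i j k l : Fin n)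
    (h : M i j / M k l > (δ + 1) ^ 2)
    (h1 : M i j > M k l) (h2 : M k l > 1) :
    μ i / μ j > μ k / μ l :=
  poip_from_disc_general M hpos μ hμ δ hD i j k l h
end
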